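/- Define $T(n,k)$ by $T(1,1)=1$, $T(n,0)=0$, $T(n,k)=0$ for $k > n$, and $T(n+1,k) = k\,T(n,k) + T(n,k-1)$ (so $T(n,k)$ are Stirling numbers of the second kind). Then for all $n \ge 1$ and $1 \le k \le n$, $k\, T(n,k)^2 \ge (k+1)\, T(n,k+1)\, T(n,k-1)$. -/

import Mathlib

/-- Stirling numbers of the second kind, via the recursion
`T(n+1,k) = k T(n,k) + T(n,k-1)` with `T(1,1) = 1`, `T(n,0) = 0` for `n ≥ 1`
and `T(n,k) = 0` for `k > n`. -/
def stirlingSecond : ℕ → ℕ → ℕ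
  | 0, k => if k = 0 then 1 else 0
  | n + 1, k =>
      if k = 0 then 0
      else k * stirlingSecond n k + stirlingSecond n (k - 1)

/-!
Induction on `n`, after identifying `T` with Mathlib's `Nat.stirlingSecond`. Write
`a, b, c, d` for `T(n,k+1), T(n,k), T(n,k-1), T(n,k-2)`. Expanding `T(n+1,·)` by the recurrence,
the terms in `a c` and `b d` are controlled by the inductive hypotheses at `k` and `k - 1`, and the
cross term in `a d` by their product, which gives `(k+1) a d ≤ (k-1) b c` once `b c > 0` is
cancelled. At the ends of the range one side vanishes.
-/

theorem stirlingSecond_eq_nat_stirlingSecond : stirlingSecond = Nat.stirlingSecond := by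
  funext n k
  induction n generalizing k with
  | zero => cases k <;> rfl
  | succ n ih =>
    cases k with
    | zero => rfl
    | succ k => simp [stirlingSecond, Nat.stirlingSecond_succ_succ, ih]

theorem Nat.stirlingSecond_pos {n k : ℕ} (hk : k ≠ 0) (hkn : k ≤ n) :
    0 < Nat.stirlingSecond n k := by
  induction n generalizing k with
  | zero => omega
  | succ n ih =>
    obtain rfl | hk1 := eq_or_ne k 1
    · simp [Nat.stirlingSecond_one_right]
    · rw [Nat.stirlingSecond_succ_left n k hk]
      exact Nat.add_pos_right _ (ih (by omega) (by omega))

/-- The inductive step with `k = m + 1` and `a, b, c, d = T(n,k+1), …, T(n,k-2)`: the conclusion is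
the inequality for row `n + 1` at `k`. -/
theorem gamma_log_concave_step {R : Type*} [CommRing R] [LinearOrder R] [IsStrictOrderedRing R]
    {m a b c d : R} (hm : 0 ≤ m) (hb : 0 < b) (hc : 0 < c)
    (hd : 0 ≤ d) (h₁ : (m + 2) * a * c ≤ (m + 1) * b ^ 2) (h₂ : (m + 1) * b * d ≤ m * c ^ 2) :
    (m + 2) * ((m + 2) * a + b) * (m * c + d) ≤ (m + 1) * ((m + 1) * b + c) ^ 2 := by
  have had : (m + 2) * a * d ≤ m * b * c := by
    refine le_of_mul_le_mul_right ?_ (by positivity : 0 < (m + 1) * b * c)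
    calc (m + 2) * a * d * ((m + 1) * b * c) = ((m + 2) * a * c) * ((m + 1) * b * d) := by ring
      _ ≤ (m + 1) * b ^ 2 * (m * c ^ 2) := mul_le_mul h₁ h₂ (by positivity) (by positivity)
      _ = m * b * c * ((m + 1) * b * c) := by ring
  have hbd : (m + 2) * b * d ≤ (m + 1) * c ^ 2 := by
    refine le_of_mul_le_mul_left ?_ (by positivity : 0 < m + 1)
    nlinarith [mul_le_mul_of_nonneg_left h₂ (by positivity : 0 ≤ m + 2), sq_nonneg c]
  nlinarith [mul_le_mul_of_nonneg_left h₁ (by positivity : 0 ≤ m * (m + 2)),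
    mul_le_mul_of_nonneg_left had (by positivity : 0 ≤ m + 2), mul_pos hb hc, sq_nonneg b]

theorem Nat.add_two_mul_stirlingSecond_mul_le (n k : ℕ) :
    (k + 2) * Nat.stirlingSecond n (k + 2) * Nat.stirlingSecond n k ≤
      (k + 1) * Nat.stirlingSecond n (k + 1) ^ 2 := by
  induction n generalizing k with
  | zero => simp
  | succ n ih =>
    obtain _ | j := k
    · simp
    obtain hnj | hjn := lt_or_ge n (j + 2)
    · simp [Nat.stirlingSecond_eq_zero_of_lt (show n + 1 < j + 1 + 2 by omega)]
    simp only [Nat.stirlingSecond_succ_succ]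
    have hb : 0 < Nat.stirlingSecond n (j + 2) := Nat.stirlingSecond_pos (by omega) hjn
    have hc : 0 < Nat.stirlingSecond n (j + 1) := Nat.stirlingSecond_pos (by omega) (by omega)
    have step := gamma_log_concave_step (m := (j : ℤ) + 1) (a := Nat.stirlingSecond n (j + 3))
      (b := Nat.stirlingSecond n (j + 2)) (c := Nat.stirlingSecond n (j + 1))
      (d := Nat.stirlingSecond n j) (by positivity) (Nat.cast_pos.2 hb) (Nat.cast_pos.2 hc)
      (by positivity) (by exact_mod_cast ih (j + 1)) (by exact_mod_cast ih j)
    exact_mod_cast step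

theorem stirlingSecond_gamma_log_concave_general (n k : ℕ) :
    (k + 1) * stirlingSecond n (k + 1) * stirlingSecond n (k - 1) ≤
      k * stirlingSecond n k ^ 2 := by
  rw [stirlingSecond_eq_nat_stirlingSecond]
  obtain _ | m := k
  · cases n <;> simp
  · exact Nat.add_two_mul_stirlingSecond_mul_le n m

/-- For Stirling numbers of the second kind, `k T(n,k)² ≥ (k+1) T(n,k+1) T(n,k-1)`. -/
theorem stirlingSecond_gamma_log_concave (n k : ℕ) (hn : 1 ≤ n) (hk1 : 1 ≤ k)
    (hkn : k ≤ n) :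
    (k + 1) * stirlingSecond n (k + 1) * stirlingSecond n (k - 1) ≤
      k * stirlingSecond n k ^ 2 :=
  stirlingSecond_gamma_log_concave_general n k
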